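/- Let κ > 0 and let K ⊂ ℝ³ be compact. Then the fundamental solution admits the far-field expansion: sup_{y ∈ K} | 4π‖x‖₂ · e^{−iκ‖x‖₂} · G(x,y) − e^{−iκ⟨x/‖x‖₂, y⟩} | → 0 as ‖x‖₂ → ∞; moreover there exist constants C > 0 and R > 0 such that this supremum is bounded by C/‖x‖₂ for all ‖x‖₂ ≥ R. -/

import Mathlib

open scoped RealInnerProductSpace

/-!
With `r = ‖x - y‖` and `s = ⟪x / ‖x‖, y⟫`, the normalised field `4π‖x‖e^{-iκ‖x‖}G(x,y)` equals
`(‖x‖ / r) e^{iκ(r - ‖x‖)}`, so the remainder is at most `|‖x‖ / r - 1| + |κ| |r - ‖x‖ + s|`.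
The first term is `O(‖y‖ / ‖x‖)` by the triangle inequality. For the phase error,
`(r - ‖x‖ + s)(r + ‖x‖ - s) = ‖y‖² - s²` and the second factor is at least `‖x‖` once
`‖x‖ ≥ 2‖y‖`, so it is `O(‖y‖² / ‖x‖)`. Both bounds are uniform on bounded sets of `y`.
-/

/-- The fundamental solution `G(x,y) = e^{iκ‖x−y‖}/(4π‖x−y‖)` of the Helmholtz equation. -/
noncomputable def helmholtzG (κ : ℝ) (x y : EuclideanSpace ℝ (Fin 3)) : ℂ :=
  Complex.exp (Complex.I * (κ : ℂ) * (‖x - y‖ : ℂ)) / (4 * (Real.pi : ℂ) * (‖x - y‖ : ℂ))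

open Complex

lemma norm_ofReal_mul_exp_sub_exp_le (a φ ψ : ℝ) :
    ‖(a : ℂ) * exp (I * φ) - exp (I * ψ)‖ ≤ |a - 1| + |φ - ψ| := by
  have hsplit : (a : ℂ) * exp (I * φ) - exp (I * ψ)
      = ((a - 1 : ℝ) : ℂ) * exp (I * φ) + exp (I * ψ) * (exp (I * (φ - ψ : ℝ)) - 1) := by
    push_cast
    rw [mul_sub, ← exp_add]
    ring_nf
  calc _ ≤ ‖((a - 1 : ℝ) : ℂ) * exp (I * φ)‖ + ‖exp (I * ψ) * (exp (I * (φ - ψ : ℝ)) - 1)‖ :=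
        hsplit ▸ norm_add_le _ _
    _ ≤ |a - 1| + |φ - ψ| := by
        rw [norm_mul, norm_mul, norm_exp_I_mul_ofReal, norm_exp_I_mul_ofReal, mul_one, one_mul,
          norm_real, Real.norm_eq_abs]
        gcongr
        exact Real.norm_exp_I_mul_ofReal_sub_one_le

lemma abs_norm_div_norm_sub_sub_one_le {E : Type*} [SeminormedAddCommGroup E] {x y : E}
    (hxy : 2 * ‖y‖ < ‖x‖) :
    |‖x‖ / ‖x - y‖ - 1| ≤ 2 * ‖y‖ / ‖x‖ := by
  have hr : ‖x‖ - ‖y‖ ≤ ‖x - y‖ := norm_sub_norm_le x y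
  have hr_pos : 0 < ‖x - y‖ := by linarith [norm_nonneg y]
  calc |‖x‖ / ‖x - y‖ - 1| = |‖x‖ - ‖x - y‖| / ‖x - y‖ := by
        rw [div_sub_one hr_pos.ne', abs_div, abs_of_pos hr_pos]
    _ ≤ ‖y‖ / ‖x - y‖ := by
        gcongr
        simpa using abs_norm_sub_norm_le x (x - y)
    _ ≤ 2 * ‖y‖ / ‖x‖ := by
        rw [div_le_div_iff₀ hr_pos (by linarith [norm_nonneg y])]
        nlinarith [norm_nonneg y]

lemma abs_norm_sub_sub_norm_add_inner_le {E : Type*} [NormedAddCommGroup E] [InnerProductSpace ℝ E]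
    {x y : E} (hxy : 2 * ‖y‖ ≤ ‖x‖) :
    |‖x - y‖ - ‖x‖ + ⟪‖x‖⁻¹ • x, y⟫| ≤ ‖y‖ ^ 2 / ‖x‖ := by
  rcases (norm_nonneg x).eq_or_lt with hx | hx
  · have hy : y = 0 := norm_le_zero_iff.1 (by linarith [norm_nonneg y])
    simp [← hx, hy]
  set n := ‖x‖
  set r := ‖x - y‖
  set s := ⟪n⁻¹ • x, y⟫
  have hns : n * s = ⟪x, y⟫ := by
    simp only [s, real_inner_smul_left, ← mul_assoc, mul_inv_cancel₀ hx.ne', one_mul]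
  have hs : |s| ≤ ‖y‖ := by
    refine le_of_mul_le_mul_left ?_ hx
    calc n * |s| = |⟪x, y⟫| := by rw [← hns, abs_mul, abs_of_pos hx]
      _ ≤ n * ‖y‖ := abs_real_inner_le_norm x y
  have hr : n - ‖y‖ ≤ r := by simpa using norm_sub_norm_le x y
  have hr_sq : r ^ 2 = n ^ 2 - 2 * (n * s) + ‖y‖ ^ 2 := hns ▸ norm_sub_sq_real x y
  have hprod : (r - n + s) * (r + n - s) = ‖y‖ ^ 2 - s ^ 2 := by linear_combination hr_sq
  obtain ⟨hs₁, hs₂⟩ := abs_le.1 hs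
  have hδ : 0 ≤ r - n + s := by nlinarith
  rw [abs_of_nonneg hδ, le_div_iff₀ hx]
  nlinarith

noncomputable def farFieldRemainder (κ : ℝ) (x y : EuclideanSpace ℝ (Fin 3)) : ℂ :=
  4 * (Real.pi : ℂ) * (‖x‖ : ℂ) * exp (-(I * (κ : ℂ) * (‖x‖ : ℂ))) * helmholtzG κ x y
    - exp (-(I * (κ : ℂ) * ((⟪‖x‖⁻¹ • x, y⟫ : ℝ) : ℂ)))

lemma farFieldRemainder_eq (κ : ℝ) (x y : EuclideanSpace ℝ (Fin 3)) :
    farFieldRemainder κ x y = ((‖x‖ / ‖x - y‖ : ℝ) : ℂ) * exp (I * (κ * (‖x - y‖ - ‖x‖) : ℝ))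
      - exp (I * (-(κ * ⟪‖x‖⁻¹ • x, y⟫) : ℝ)) := by
  have hπ : (Real.pi : ℂ) ≠ 0 := ofReal_ne_zero.2 Real.pi_ne_zero
  rw [farFieldRemainder, helmholtzG]
  push_cast
  congr 1
  · rw [show I * (κ * (‖x - y‖ - ‖x‖)) = I * κ * ‖x - y‖ + -(I * κ * ‖x‖) by ring, exp_add]
    field_simp
  · ring_nf

lemma norm_farFieldRemainder_le (κ : ℝ) {x y : EuclideanSpace ℝ (Fin 3)} (hxy : 2 * ‖y‖ < ‖x‖) :
    ‖farFieldRemainder κ x y‖ ≤ (2 * ‖y‖ + |κ| * ‖y‖ ^ 2) / ‖x‖ := by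
  rw [farFieldRemainder_eq]
  refine (norm_ofReal_mul_exp_sub_exp_le _ _ _).trans ?_
  have hphase := abs_norm_sub_sub_norm_add_inner_le hxy.le
  calc _ = |‖x‖ / ‖x - y‖ - 1| + |κ| * |‖x - y‖ - ‖x‖ + ⟪‖x‖⁻¹ • x, y⟫| := by
        rw [← abs_mul]; ring_nf
    _ ≤ 2 * ‖y‖ / ‖x‖ + |κ| * (‖y‖ ^ 2 / ‖x‖) := by
        gcongr
        exact abs_norm_div_norm_sub_sub_one_le hxy
    _ = (2 * ‖y‖ + |κ| * ‖y‖ ^ 2) / ‖x‖ := by ring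

theorem fundamentalSolution_farField (κ : ℝ)
    (K : Set (EuclideanSpace ℝ (Fin 3))) (hK : IsCompact K) :
    (∀ ε > 0, ∃ R : ℝ, ∀ x : EuclideanSpace ℝ (Fin 3), R ≤ ‖x‖ → ∀ y ∈ K,
      ‖4 * (Real.pi : ℂ) * (‖x‖ : ℂ) * Complex.exp (-(Complex.I * (κ : ℂ) * (‖x‖ : ℂ)))
          * helmholtzG κ x y
        - Complex.exp (-(Complex.I * (κ : ℂ) * ((⟪‖x‖⁻¹ • x, y⟫ : ℝ) : ℂ)))‖ < ε) ∧
    ∃ C > (0 : ℝ), ∃ R > (0 : ℝ), ∀ x : EuclideanSpace ℝ (Fin 3), R ≤ ‖x‖ → ∀ y ∈ K,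
      ‖4 * (Real.pi : ℂ) * (‖x‖ : ℂ) * Complex.exp (-(Complex.I * (κ : ℂ) * (‖x‖ : ℂ)))
          * helmholtzG κ x y
        - Complex.exp (-(Complex.I * (κ : ℂ) * ((⟪‖x‖⁻¹ • x, y⟫ : ℝ) : ℂ)))‖ ≤ C / ‖x‖ := by
  obtain ⟨M, hM, hKM⟩ := hK.isBounded.exists_pos_norm_le
  set C := 2 * M + |κ| * M ^ 2 with hC_def
  have hC : 0 < C := add_pos_of_pos_of_nonneg (by linarith) (by positivity)
  have hbound : ∀ x : EuclideanSpace ℝ (Fin 3), 2 * M + 1 ≤ ‖x‖ → ∀ y ∈ K,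
      ‖farFieldRemainder κ x y‖ ≤ C / ‖x‖ := by
    intro x hx y hy
    have hyM := hKM y hy
    refine (norm_farFieldRemainder_le κ (by linarith)).trans ?_
    rw [hC_def]
    gcongr
  refine ⟨fun ε hε => ⟨max (2 * M + 1) (C / ε + 1), fun x hx y hy => ?_⟩,
    C, hC, 2 * M + 1, by linarith, hbound⟩
  have hx₁ := (le_max_left _ _).trans hx
  have hx₂ := (le_max_right _ _).trans hx
  refine (hbound x hx₁ y hy).trans_lt ?_
  exact (div_lt_comm₀ hε (by linarith)).1 (by linarith)
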